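/- For every positive integer n and all real numbers α and β, the n×n Hankel determinant det(αβ·m_{i+j} + (α+β)·m_{i+j+1} + m_{i+j+2})_{i,j=0}^{n−1} equals (Σ_{j=0}^{n} f_j(α)·f_j(β)·∏_{ℓ=j}^{n−1} t_ℓ) · det(m_{i+j})_{i,j=0}^{n−1}. -/
import Mathlib


/-- `motzkinGF s t n k` is the weighted Motzkin path generating function `m(n,k)`:
`m(0,k) = [k = 0]`, `m(n,k) = 0` for `k < 0`, and
`m(n,k) = m(n-1,k-1) + s_k m(n-1,k) + t_k m(n-1,k+1)` for `n ≥ 1`, `k ≥ 0`. -/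
def motzkinGF (s t : ℕ → ℝ) : ℕ → ℤ → ℝ
  | 0, k => if k = 0 then 1 else 0
  | n+1, k =>
      if k < 0 then 0
      else motzkinGF s t n (k-1) + s k.toNat * motzkinGF s t n k
             + t k.toNat * motzkinGF s t n (k+1)

/-- The polynomials `f_n(α)`: `f_0 = 1`, `f_1 = α + s_0`, and
`f_n(α) = (α + s_{n-1}) f_{n-1}(α) - t_{n-2} f_{n-2}(α)` for `n ≥ 2`. -/
def fpoly (s t : ℕ → ℝ) (α : ℝ) : ℕ → ℝ
  | 0 => 1
  | 1 => α + s 0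
  | n+2 => (α + s (n+1)) * fpoly s t α (n+1) - t n * fpoly s t α n


namespace HankelAux

variable (s t : ℕ → ℝ)

/-- `ℕ`-indexed moments. -/
noncomputable def mn (n k : ℕ) : ℝ := motzkinGF s t n (k : ℤ)

lemma motzkin_neg (n : ℕ) (k : ℤ) (hk : k < 0) : motzkinGF s t n k = 0 := by
  cases n with
  | zero => simp [motzkinGF, hk.ne]
  | succ n => simp [motzkinGF, hk]

lemma mn_succ_zero (n : ℕ) :
    mn s t (n+1) 0 = s 0 * mn s t n 0 + t 0 * mn s t n 1 := by
  have h : motzkinGF s t n (-1 : ℤ) = 0 := motzkin_neg s t n _ (by norm_num)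
  show motzkinGF s t (n+1) ((0:ℕ):ℤ) = _
  rw [show ((0:ℕ):ℤ) = 0 by norm_num]
  simp [motzkinGF, mn, h]

lemma mn_succ_succ (n k : ℕ) :
    mn s t (n+1) (k+1) = mn s t n k + s (k+1) * mn s t n (k+1) + t (k+1) * mn s t n (k+2) := by
  show motzkinGF s t (n+1) ((k+1 : ℕ):ℤ) = _
  have h1 : ¬ ((k+1 : ℕ):ℤ) < 0 := by omega
  rw [motzkinGF, if_neg h1]
  have h2 : ((k+1:ℕ):ℤ) - 1 = ((k:ℕ):ℤ) := by push_cast; ring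
  have h3 : ((k+1:ℕ):ℤ) + 1 = ((k+2:ℕ):ℤ) := by push_cast; ring
  have h4 : ((k+1:ℕ):ℤ).toNat = k+1 := by simp
  rw [h2, h3, h4]
  rfl

lemma mn_zero (k : ℕ) : mn s t 0 k = if k = 0 then 1 else 0 := by
  simp [mn, motzkinGF]

lemma mn_eq_zero : ∀ n k : ℕ, n < k → mn s t n k = 0 := by
  intro n
  induction n with
  | zero => intro k hk; rw [mn_zero, if_neg (by omega)]
  | succ n ih =>
    intro k hk
    obtain ⟨k, rfl⟩ : ∃ k', k = k' + 1 := ⟨k - 1, by omega⟩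
    rw [mn_succ_succ, ih k (by omega), ih (k+1) (by omega), ih (k+2) (by omega)]
    ring

lemma mn_diag : ∀ n : ℕ, mn s t n n = 1 := by
  intro n
  induction n with
  | zero => simp [mn_zero]
  | succ n ih =>
    rw [mn_succ_succ, ih, mn_eq_zero s t n (n+1) (by omega), mn_eq_zero s t n (n+2) (by omega)]
    ring

/-- `d k = t_0 ⋯ t_{k-1}`. -/
noncomputable def dd (k : ℕ) : ℝ := ∏ ℓ ∈ Finset.range k, t ℓ

lemma dd_succ (k : ℕ) : dd t (k+1) = dd t k * t k := Finset.prod_range_succ _ _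

end HankelAux

namespace HankelAux

variable (s t : ℕ → ℝ)

lemma mn_succ (n k : ℕ) :
    mn s t (n+1) k = (if k = 0 then 0 else mn s t n (k-1))
      + s k * mn s t n k + t k * mn s t n (k+1) := by
  cases k with
  | zero => rw [mn_succ_zero]; simp
  | succ k => rw [mn_succ_succ]; simp

lemma step_sum (N a b : ℕ) (hb : b < N) :
    ∑ k ∈ Finset.range (N+1), mn s t (a+1) k * mn s t b k * dd t k
      = ∑ k ∈ Finset.range (N+1), mn s t a k * mn s t (b+1) k * dd t k := by
  have expandL : ∑ k ∈ Finset.range (N+1), mn s t (a+1) k * mn s t b k * dd t k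
      = (∑ k ∈ Finset.range (N+1), (if k = 0 then 0 else mn s t a (k-1)) * mn s t b k * dd t k)
        + (∑ k ∈ Finset.range (N+1), s k * mn s t a k * mn s t b k * dd t k)
        + (∑ k ∈ Finset.range (N+1), t k * mn s t a (k+1) * mn s t b k * dd t k) := by
    rw [← Finset.sum_add_distrib, ← Finset.sum_add_distrib]
    exact Finset.sum_congr rfl fun k _ => by rw [mn_succ]; ring
  have expandR : ∑ k ∈ Finset.range (N+1), mn s t a k * mn s t (b+1) k * dd t k
      = (∑ k ∈ Finset.range (N+1), mn s t a k * (if k = 0 then 0 else mn s t b (k-1)) * dd t k)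
        + (∑ k ∈ Finset.range (N+1), s k * mn s t a k * mn s t b k * dd t k)
        + (∑ k ∈ Finset.range (N+1), t k * mn s t a k * mn s t b (k+1) * dd t k) := by
    rw [← Finset.sum_add_distrib, ← Finset.sum_add_distrib]
    exact Finset.sum_congr rfl fun k _ => by rw [mn_succ]; ring
  have hAC : (∑ k ∈ Finset.range (N+1), (if k = 0 then 0 else mn s t a (k-1)) * mn s t b k * dd t k)
      = ∑ k ∈ Finset.range (N+1), t k * mn s t a k * mn s t b (k+1) * dd t k := by
    rw [Finset.sum_range_succ', Finset.sum_range_succ]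
    rw [mn_eq_zero s t b (N+1) (by omega)]
    simp only [Nat.add_sub_cancel, Nat.succ_ne_zero, if_false, if_true, reduceIte,
      zero_mul, mul_zero, add_zero]
    exact Finset.sum_congr rfl fun k _ => by rw [dd_succ]; ring
  have hCA : (∑ k ∈ Finset.range (N+1), t k * mn s t a (k+1) * mn s t b k * dd t k)
      = ∑ k ∈ Finset.range (N+1), mn s t a k * (if k = 0 then 0 else mn s t b (k-1)) * dd t k := by
    rw [Finset.sum_range_succ, Finset.sum_range_succ']
    rw [mn_eq_zero s t b N (by omega)]
    simp only [Nat.add_sub_cancel, Nat.succ_ne_zero, if_false, if_true, reduceIte,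
      zero_mul, mul_zero, add_zero]
    exact Finset.sum_congr rfl fun k _ => by rw [dd_succ]; ring
  rw [expandL, expandR, hAC, hCA]
  ring

lemma splitting : ∀ (b a N : ℕ), b ≤ N →
    mn s t (a+b) 0 = ∑ k ∈ Finset.range (N+1), mn s t a k * mn s t b k * dd t k := by
  intro b
  induction b with
  | zero =>
    intro a N _
    rw [Finset.sum_eq_single 0]
    · simp [mn_zero, dd]
    · intro k _ hk
      rw [mn_zero, if_neg hk]; ring
    · intro h; exact absurd (Finset.mem_range.mpr (by omega)) h
  | succ b ih =>
    intro a N hb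
    rw [show a + (b+1) = (a+1) + b by omega, ih (a+1) N (by omega),
      step_sum s t N a b (by omega)]

end HankelAux

namespace HankelAux

open Matrix

lemma det_last_col {m : ℕ} (M : Matrix (Fin (m+1)) (Fin (m+1)) ℝ)
    (h : ∀ i : Fin m, M i.castSucc (Fin.last m) = 0) :
    M.det = M (Fin.last m) (Fin.last m) * (M.submatrix Fin.castSucc Fin.castSucc).det := by
  rw [Matrix.det_succ_column M (Fin.last m), Fin.sum_univ_castSucc]
  have h1 : ∀ i : Fin m,
      (-1 : ℝ) ^ ((i.castSucc : ℕ) + (Fin.last m : ℕ)) * M i.castSucc (Fin.last m)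
        * (M.submatrix i.castSucc.succAbove (Fin.last m).succAbove).det = 0 := by
    intro i; rw [h i]; ring
  rw [Finset.sum_congr rfl (fun i _ => h1 i), Finset.sum_const_zero, zero_add,
    Fin.succAbove_last]
  have : (-1 : ℝ) ^ ((Fin.last m : ℕ) + (Fin.last m : ℕ)) = 1 :=
    Even.neg_one_pow ⟨(Fin.last m : ℕ), by ring⟩
  rw [this, one_mul]

lemma det_last_row {m : ℕ} (M : Matrix (Fin (m+1)) (Fin (m+1)) ℝ)
    (h : ∀ j : Fin m, M (Fin.last m) j.castSucc = 0) :
    M.det = M (Fin.last m) (Fin.last m) * (M.submatrix Fin.castSucc Fin.castSucc).det := by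
  rw [← Matrix.det_transpose M, det_last_col Mᵀ (fun j => h j)]
  rw [show Mᵀ.submatrix Fin.castSucc Fin.castSucc = (M.submatrix Fin.castSucc Fin.castSucc)ᵀ
    from rfl, Matrix.det_transpose]
  rfl

lemma det_add_corner {m : ℕ} (M : Matrix (Fin (m+1)) (Fin (m+1)) ℝ) (c : ℝ) :
    (M + Matrix.of fun i j => if i = Fin.last m ∧ j = Fin.last m then c else 0).det
      = M.det + c * (M.submatrix Fin.castSucc Fin.castSucc).det := by
  have key : M + (Matrix.of fun i j => if i = Fin.last m ∧ j = Fin.last m then c else 0)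
      = M.updateCol (Fin.last m)
          ((fun i => M i (Fin.last m)) + (fun i => if i = Fin.last m then c else 0)) := by
    ext i j
    by_cases hj : j = Fin.last m
    · subst hj
      rw [Matrix.updateCol_apply, if_pos rfl]
      simp [Matrix.add_apply]
    · rw [Matrix.updateCol_apply, if_neg hj]
      simp [Matrix.add_apply, hj]
  rw [key, Matrix.det_updateCol_add, Matrix.updateCol_eq_self]
  congr 1
  set M' := M.updateCol (Fin.last m) (fun i => if i = Fin.last m then c else 0) with hM'
  have h1 : ∀ i : Fin m, M' i.castSucc (Fin.last m) = 0 := by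
    intro i
    rw [hM', Matrix.updateCol_apply, if_pos rfl,
      if_neg (Fin.ne_of_lt (Fin.castSucc_lt_last i))]
  rw [det_last_col M' h1]
  have h2 : M' (Fin.last m) (Fin.last m) = c := by
    rw [hM', Matrix.updateCol_apply, if_pos rfl, if_pos rfl]
  have h3 : M'.submatrix Fin.castSucc Fin.castSucc = M.submatrix Fin.castSucc Fin.castSucc := by
    ext i j
    rw [Matrix.submatrix_apply, Matrix.submatrix_apply, hM', Matrix.updateCol_apply,
      if_neg (Fin.ne_of_lt (Fin.castSucc_lt_last j))]
  rw [h2, h3]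

end HankelAux

namespace HankelAux

open Matrix

variable (s t : ℕ → ℝ) (α : ℝ)

/-- Entries of the tridiagonal matrix. -/
noncomputable def rent (p k : ℕ) : ℝ :=
  (if p + 1 = k then 1 else 0) + (if p = k then α + s k else 0) + (if p = k + 1 then t k else 0)

noncomputable def Rmat (n : ℕ) : Matrix (Fin n) (Fin n) ℝ :=
  Matrix.of fun p k : Fin n => rent s t α (p : ℕ) (k : ℕ)

lemma succAbove_castSucc_last_last (n : ℕ) :
    (((Fin.last n).castSucc).succAbove (Fin.last n) : ℕ) = n + 1 := by
  rw [Fin.succAbove_of_le_castSucc _ _ (le_refl _)]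
  simp

lemma succAbove_castSucc_last_castSucc (n : ℕ) (p : Fin n) :
    (((Fin.last n).castSucc).succAbove p.castSucc : ℕ) = (p : ℕ) := by
  rw [Fin.succAbove_of_castSucc_lt _ _ (by simp [Fin.lt_def, p.isLt])]
  simp

lemma det_Rmat (n : ℕ) : (Rmat s t α n).det = fpoly s t α n := by
  induction n using Nat.twoStepInduction with
  | zero => simp [fpoly]
  | one =>
    rw [Matrix.det_fin_one]
    simp [Rmat, rent, fpoly]
  | more n ih ih1 =>
    rw [Matrix.det_succ_column (Rmat s t α (n+2)) (Fin.last (n+1)),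
      Fin.sum_univ_castSucc, Fin.sum_univ_castSucc]
    have hz : ∀ i : Fin n,
        (-1 : ℝ) ^ ((i.castSucc.castSucc : ℕ) + ((Fin.last (n+1)) : ℕ))
          * (Rmat s t α (n+2)) i.castSucc.castSucc (Fin.last (n+1))
          * ((Rmat s t α (n+2)).submatrix i.castSucc.castSucc.succAbove
              (Fin.last (n+1)).succAbove).det = 0 := by
      intro i
      have : (Rmat s t α (n+2)) i.castSucc.castSucc (Fin.last (n+1)) = 0 := by
        have hi : (i : ℕ) < n := i.isLt
        simp only [Rmat, Matrix.of_apply, rent, Fin.coe_castSucc, Fin.val_last]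
        rw [if_neg (by omega), if_neg (by omega), if_neg (by omega)]
        ring
      rw [this]; ring
    rw [Finset.sum_congr rfl (fun i _ => hz i), Finset.sum_const_zero, zero_add]
    -- the two remaining terms
    have e1 : (Rmat s t α (n+2)) (Fin.last (n+1)) (Fin.last (n+1)) = α + s (n+1) := by
      simp only [Rmat, Matrix.of_apply, rent, Fin.val_last]
      rw [if_neg (show ¬ (n+1+1 = n+1) by omega), if_neg (show ¬ (n+1 = n+1+1) by omega)]
      simp
    have e2 : (Rmat s t α (n+2)) (Fin.last n).castSucc (Fin.last (n+1)) = 1 := by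
      simp only [Rmat, Matrix.of_apply, rent, Fin.coe_castSucc, Fin.val_last]
      rw [if_neg (show ¬ (n = n+1) by omega), if_neg (show ¬ (n = n+1+1) by omega)]
      simp
    have sub1 : (Rmat s t α (n+2)).submatrix (Fin.last (n+1)).succAbove
        (Fin.last (n+1)).succAbove = Rmat s t α (n+1) := by
      ext p k
      simp [Rmat, Fin.succAbove_last]
    -- the Q matrix
    set Q := (Rmat s t α (n+2)).submatrix ((Fin.last n).castSucc).succAbove
        (Fin.last (n+1)).succAbove with hQ
    have hQrow : ∀ j : Fin n, Q (Fin.last n) j.castSucc = 0 := by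
      intro j
      have hj : (j : ℕ) < n := j.isLt
      simp only [hQ, Matrix.submatrix_apply, Fin.succAbove_last, Rmat, Matrix.of_apply, rent,
        succAbove_castSucc_last_last, Fin.coe_castSucc]
      rw [if_neg (by omega), if_neg (by omega), if_neg (by omega)]
      ring
    have hQcorner : Q (Fin.last n) (Fin.last n) = t n := by
      simp only [hQ, Matrix.submatrix_apply, Fin.succAbove_last, Rmat, Matrix.of_apply, rent,
        succAbove_castSucc_last_last, Fin.coe_castSucc, Fin.val_last]
      rw [if_neg (show ¬ (n+1+1 = n) by omega), if_neg (show ¬ (n+1 = n) by omega)]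
      simp
    have hQsub : Q.submatrix Fin.castSucc Fin.castSucc = Rmat s t α n := by
      ext p k
      simp only [hQ, Matrix.submatrix_apply, Fin.succAbove_last, Rmat, Matrix.of_apply, rent,
        succAbove_castSucc_last_castSucc, Fin.coe_castSucc]
    have hQdet : Q.det = t n * fpoly s t α n := by
      rw [det_last_row Q hQrow, hQcorner, hQsub, ih]
    rw [e1, e2, sub1, hQdet, ih1]
    have sgn1 : (-1 : ℝ) ^ (((Fin.last n).castSucc : ℕ) + ((Fin.last (n+1)) : ℕ)) = -1 := by
      simp only [Fin.coe_castSucc, Fin.val_last]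
      exact Odd.neg_one_pow ⟨n, by ring⟩
    have sgn2 : (-1 : ℝ) ^ (((Fin.last (n+1)) : ℕ) + ((Fin.last (n+1)) : ℕ)) = 1 := by
      simp only [Fin.val_last]
      exact Even.neg_one_pow ⟨n+1, by ring⟩
    rw [sgn1, sgn2]
    show -1 * 1 * (t n * fpoly s t α n) + 1 * (α + s (n+1)) * fpoly s t α (n+1)
      = fpoly s t α (n+2)
    rw [show fpoly s t α (n+2) = (α + s (n+1)) * fpoly s t α (n+1) - t n * fpoly s t α n from rfl]
    ring

end HankelAux

namespace HankelAux

open Matrix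

variable (s t : ℕ → ℝ) (α β : ℝ)

noncomputable def Lmat (n : ℕ) : Matrix (Fin n) (Fin n) ℝ :=
  Matrix.of fun i k : Fin n => mn s t (i : ℕ) (k : ℕ)

noncomputable def Gmat (n : ℕ) : Matrix (Fin n) (Fin n) ℝ :=
  Matrix.of fun i k : Fin n => α * mn s t (i : ℕ) (k : ℕ) + mn s t ((i : ℕ)+1) (k : ℕ)

noncomputable def Dmat (n : ℕ) : Matrix (Fin n) (Fin n) ℝ :=
  Matrix.diagonal (fun k : Fin n => dd t (k : ℕ))

lemma det_Dmat (n : ℕ) : (Dmat t n).det = ∏ k ∈ Finset.range n, dd t k := by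
  rw [Dmat, Matrix.det_diagonal, Fin.prod_univ_eq_prod_range]

lemma det_Lmat (n : ℕ) : (Lmat s t n).det = 1 := by
  have h : (Lmat s t n).BlockTriangular OrderDual.toDual := by
    intro i j hij
    exact mn_eq_zero s t (i : ℕ) (j : ℕ) hij
  rw [Matrix.det_of_lowerTriangular _ h]
  exact Finset.prod_eq_one fun i _ => mn_diag s t (i : ℕ)

lemma splitting' (a b N : ℕ) (hb : b < N) :
    mn s t (a+b) 0 = ∑ k ∈ Finset.range N, mn s t a k * mn s t b k * dd t k := by
  have h := splitting s t b a (N-1) (by omega)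
  rwa [show N-1+1 = N by omega] at h

lemma Gmat_eq (n : ℕ) : Gmat s t α n = Lmat s t n * Rmat s t α n := by
  ext i k
  have hk : (k : ℕ) < n := k.isLt
  have hi : (i : ℕ) < n := i.isLt
  have hmul : (Lmat s t n * Rmat s t α n) i k
      = ∑ p ∈ Finset.range n, mn s t (i : ℕ) p * rent s t α p (k : ℕ) := by
    rw [Matrix.mul_apply,
      ← Fin.sum_univ_eq_sum_range (fun p => mn s t (i : ℕ) p * rent s t α p (k : ℕ)) n]
    rfl
  have hexp : ∑ p ∈ Finset.range n, mn s t (i : ℕ) p * rent s t α p (k : ℕ)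
      = (∑ p ∈ Finset.range n, (if p = (k:ℕ)-1 ∧ (k:ℕ) ≠ 0 then mn s t (i:ℕ) p else 0))
        + ((∑ p ∈ Finset.range n, (if p = (k:ℕ) then mn s t (i:ℕ) p * (α + s (k:ℕ)) else 0))
        + (∑ p ∈ Finset.range n, (if p = (k:ℕ)+1 then mn s t (i:ℕ) p * t (k:ℕ) else 0))) := by
    rw [← Finset.sum_add_distrib, ← Finset.sum_add_distrib]
    refine Finset.sum_congr rfl fun p _ => ?_
    have hiff : (if p = (k:ℕ)-1 ∧ (k:ℕ) ≠ 0 then mn s t (i:ℕ) p else (0:ℝ))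
        = (if p + 1 = (k:ℕ) then mn s t (i:ℕ) p else 0) := by
      apply if_congr _ rfl rfl
      omega
    rw [rent, hiff]
    split_ifs <;> first | ring | omega
  have s2 : (∑ p ∈ Finset.range n, (if p = (k:ℕ) then mn s t (i:ℕ) p * (α + s (k:ℕ)) else 0))
      = mn s t (i:ℕ) (k:ℕ) * (α + s (k:ℕ)) := by
    rw [Finset.sum_ite_eq' (Finset.range n) (k:ℕ), if_pos (Finset.mem_range.mpr hk)]
  have s1 : (∑ p ∈ Finset.range n, (if p = (k:ℕ)-1 ∧ (k:ℕ) ≠ 0 then mn s t (i:ℕ) p else 0))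
      = if (k:ℕ) = 0 then 0 else mn s t (i:ℕ) ((k:ℕ)-1) := by
    by_cases hk0 : (k:ℕ) = 0
    · rw [if_pos hk0]
      exact Finset.sum_eq_zero fun p _ => if_neg (by omega)
    · rw [if_neg hk0]
      have : ∀ p, (p = (k:ℕ)-1 ∧ (k:ℕ) ≠ 0) ↔ p = (k:ℕ)-1 := fun p => by
        constructor; exact fun h => h.1; exact fun h => ⟨h, hk0⟩
      simp only [this]
      rw [Finset.sum_ite_eq' (Finset.range n) ((k:ℕ)-1), if_pos (Finset.mem_range.mpr (by omega))]
  have s3 : (∑ p ∈ Finset.range n, (if p = (k:ℕ)+1 then mn s t (i:ℕ) p * t (k:ℕ) else 0))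
      = t (k:ℕ) * mn s t (i:ℕ) ((k:ℕ)+1) := by
    rw [Finset.sum_ite_eq' (Finset.range n) ((k:ℕ)+1)]
    by_cases h : (k:ℕ)+1 < n
    · rw [if_pos (Finset.mem_range.mpr h)]; ring
    · rw [if_neg (by simp [Finset.mem_range]; omega),
        mn_eq_zero s t (i:ℕ) ((k:ℕ)+1) (by omega)]
      ring
  show α * mn s t (i : ℕ) (k : ℕ) + mn s t ((i : ℕ)+1) (k : ℕ) = _
  rw [hmul, hexp, s1, s2, s3, mn_succ]
  ring

lemma det_Gmat (n : ℕ) : (Gmat s t α n).det = fpoly s t α n := by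
  rw [Gmat_eq, Matrix.det_mul, det_Lmat, one_mul, det_Rmat]

noncomputable def HankelMat (n : ℕ) : Matrix (Fin n) (Fin n) ℝ :=
  Matrix.of fun i j : Fin n => mn s t ((i:ℕ) + (j:ℕ)) 0

lemma det_Hankel (n : ℕ) : (HankelMat s t n).det = ∏ k ∈ Finset.range n, dd t k := by
  have h : HankelMat s t n = Lmat s t n * Dmat t n * (Lmat s t n)ᵀ := by
    ext i j
    have hmul : (Lmat s t n * Dmat t n * (Lmat s t n)ᵀ) i j
        = ∑ p ∈ Finset.range n, mn s t (i:ℕ) p * dd t p * mn s t (j:ℕ) p := by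
      rw [Matrix.mul_apply,
        ← Fin.sum_univ_eq_sum_range (fun p => mn s t (i:ℕ) p * dd t p * mn s t (j:ℕ) p) n]
      refine Finset.sum_congr rfl fun p _ => ?_
      rw [Dmat, Matrix.mul_diagonal]
      rfl
    show mn s t ((i:ℕ)+(j:ℕ)) 0 = _
    rw [hmul, splitting' s t (i:ℕ) (j:ℕ) n j.isLt]
    exact Finset.sum_congr rfl fun p _ => by ring
  rw [h, Matrix.det_mul, Matrix.det_mul, det_Lmat, Matrix.det_transpose, det_Lmat, det_Dmat]
  ring

noncomputable def Bmat (n : ℕ) : Matrix (Fin n) (Fin n) ℝ :=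
  Matrix.of fun i j : Fin n =>
    α * β * mn s t ((i:ℕ) + (j:ℕ)) 0 + (α + β) * mn s t ((i:ℕ) + (j:ℕ) + 1) 0
      + mn s t ((i:ℕ) + (j:ℕ) + 2) 0

lemma Bentry (n i j : ℕ) (hj : j < n) :
    α * β * mn s t (i + j) 0 + (α + β) * mn s t (i + j + 1) 0 + mn s t (i + j + 2) 0
      = ∑ k ∈ Finset.range (n+1),
          (α * mn s t i k + mn s t (i+1) k) * (β * mn s t j k + mn s t (j+1) k) * dd t k := by
  have e1 := splitting' s t i j (n+1) (by omega)
  have e2 := splitting' s t i (j+1) (n+1) (by omega)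
  have e3 := splitting' s t (i+1) j (n+1) (by omega)
  have e4 := splitting' s t (i+1) (j+1) (n+1) (by omega)
  have expand : ∑ k ∈ Finset.range (n+1),
        (α * mn s t i k + mn s t (i+1) k) * (β * mn s t j k + mn s t (j+1) k) * dd t k
      = α * β * mn s t (i + j) 0 + α * mn s t (i + (j+1)) 0 + β * mn s t (i+1 + j) 0
        + mn s t (i+1 + (j+1)) 0 := by
    rw [e1, e2, e3, e4, Finset.mul_sum, Finset.mul_sum, Finset.mul_sum,
      ← Finset.sum_add_distrib, ← Finset.sum_add_distrib, ← Finset.sum_add_distrib]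
    exact Finset.sum_congr rfl fun k _ => by ring
  rw [expand, show i + (j+1) = i + j + 1 by ring, show i+1+j = i+j+1 by ring,
    show i+1+(j+1) = i+j+2 by ring]
  ring

lemma main_aux : ∀ n : ℕ, (Bmat s t α β n).det
    = (∑ j ∈ Finset.range (n + 1),
        fpoly s t α j * fpoly s t β j * ∏ ℓ ∈ Finset.Ico j n, t ℓ)
      * ∏ k ∈ Finset.range n, dd t k := by
  intro n
  induction n with
  | zero => simp [fpoly]
  | succ n ih =>
    have matentry : ∀ i j : Fin (n+1),
        (Gmat s t α (n+1) * Dmat t (n+1) * (Gmat s t β (n+1))ᵀ) i j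
          = ∑ k ∈ Finset.range (n+1),
              (α * mn s t (i:ℕ) k + mn s t ((i:ℕ)+1) k)
                * (β * mn s t (j:ℕ) k + mn s t ((j:ℕ)+1) k) * dd t k := by
      intro i j
      rw [Matrix.mul_apply,
        ← Fin.sum_univ_eq_sum_range (fun k =>
            (α * mn s t (i:ℕ) k + mn s t ((i:ℕ)+1) k)
              * (β * mn s t (j:ℕ) k + mn s t ((j:ℕ)+1) k) * dd t k) (n+1)]
      refine Finset.sum_congr rfl fun p _ => ?_
      rw [Dmat, Matrix.mul_diagonal]
      show (α * mn s t (i:ℕ) (p:ℕ) + mn s t ((i:ℕ)+1) (p:ℕ)) * dd t (p:ℕ)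
          * (β * mn s t (j:ℕ) (p:ℕ) + mn s t ((j:ℕ)+1) (p:ℕ)) = _
      ring
    have hsplit : Bmat s t α β (n+1)
        = (Gmat s t α (n+1) * Dmat t (n+1) * (Gmat s t β (n+1))ᵀ)
          + Matrix.of (fun i j : Fin (n+1) =>
              if i = Fin.last n ∧ j = Fin.last n then dd t (n+1) else 0) := by
      ext i j
      show α * β * mn s t ((i:ℕ) + (j:ℕ)) 0 + (α + β) * mn s t ((i:ℕ) + (j:ℕ) + 1) 0
          + mn s t ((i:ℕ) + (j:ℕ) + 2) 0 = _
      rw [Matrix.add_apply, matentry i j,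
        Bentry s t α β (n+1) (i:ℕ) (j:ℕ) j.isLt, Finset.sum_range_succ]
      congr 1
      rw [mn_eq_zero s t (i:ℕ) (n+1) (by omega), mn_eq_zero s t (j:ℕ) (n+1) (by omega)]
      by_cases hi : (i:ℕ) = n
      · by_cases hj : (j:ℕ) = n
        · rw [hi, hj, mn_diag]
          show _ = Matrix.of _ i j
          rw [Matrix.of_apply, if_pos ⟨Fin.ext hi, Fin.ext hj⟩]
          ring
        · rw [mn_eq_zero s t ((j:ℕ)+1) (n+1) (by omega)]
          show _ = Matrix.of _ i j
          rw [Matrix.of_apply, if_neg (by rintro ⟨-, rfl⟩; simp at hj)]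
          ring
      · rw [mn_eq_zero s t ((i:ℕ)+1) (n+1) (by omega)]
        show _ = Matrix.of _ i j
        rw [Matrix.of_apply, if_neg (by rintro ⟨rfl, -⟩; simp at hi)]
        ring
    have hsub : (Gmat s t α (n+1) * Dmat t (n+1) * (Gmat s t β (n+1))ᵀ).submatrix
        Fin.castSucc Fin.castSucc = Bmat s t α β n := by
      ext i j
      rw [Matrix.submatrix_apply, matentry i.castSucc j.castSucc]
      show _ = α * β * mn s t ((i:ℕ) + (j:ℕ)) 0 + (α + β) * mn s t ((i:ℕ) + (j:ℕ) + 1) 0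
          + mn s t ((i:ℕ) + (j:ℕ) + 2) 0
      rw [Bentry s t α β n (i:ℕ) (j:ℕ) j.isLt]
      simp
    rw [hsplit, det_add_corner, Matrix.det_mul, Matrix.det_mul, det_Gmat,
      Matrix.det_transpose, det_Gmat, det_Dmat, hsub, ih]
    have hsum : ∑ j ∈ Finset.range (n + 1 + 1),
          fpoly s t α j * fpoly s t β j * ∏ ℓ ∈ Finset.Ico j (n+1), t ℓ
        = (∑ j ∈ Finset.range (n + 1),
            fpoly s t α j * fpoly s t β j * ∏ ℓ ∈ Finset.Ico j n, t ℓ) * t n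
          + fpoly s t α (n+1) * fpoly s t β (n+1) := by
      rw [Finset.sum_range_succ, Finset.Ico_self, Finset.prod_empty, mul_one, Finset.sum_mul]
      congr 1
      refine Finset.sum_congr rfl fun j hj => ?_
      rw [Finset.prod_Ico_succ_top (Nat.lt_succ_iff.mp (Finset.mem_range.mp hj))]
      ring
    rw [hsum, Finset.prod_range_succ, dd_succ]
    ring

end HankelAux


/-- Theorem 1: for `n ≥ 1` and real `α, β`,
`det(αβ m_{i+j} + (α+β) m_{i+j+1} + m_{i+j+2})_{i,j=0}^{n-1}
  = (∑_{j=0}^{n} f_j(α) f_j(β) ∏_{ℓ=j}^{n-1} t_ℓ) · det(m_{i+j})_{i,j=0}^{n-1}`. -/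
theorem hankel_three_term_moments (s t : ℕ → ℝ) (ht : ∀ n, t n ≠ 0)
    (n : ℕ) (hn : 0 < n) (α β : ℝ) :
    Matrix.det (Matrix.of fun i j : Fin n =>
        α * β * motzkinGF s t ((i : ℕ) + (j : ℕ)) 0
          + (α + β) * motzkinGF s t ((i : ℕ) + (j : ℕ) + 1) 0
          + motzkinGF s t ((i : ℕ) + (j : ℕ) + 2) 0)
      = (∑ j ∈ Finset.range (n + 1),
            fpoly s t α j * fpoly s t β j * ∏ ℓ ∈ Finset.Ico j n, t ℓ)
        * Matrix.det (Matrix.of fun i j : Fin n =>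
            motzkinGF s t ((i : ℕ) + (j : ℕ)) 0) := by
  have hB : (Matrix.of fun i j : Fin n =>
        α * β * motzkinGF s t ((i : ℕ) + (j : ℕ)) 0
          + (α + β) * motzkinGF s t ((i : ℕ) + (j : ℕ) + 1) 0
          + motzkinGF s t ((i : ℕ) + (j : ℕ) + 2) 0) = HankelAux.Bmat s t α β n := by
    ext i j
    simp [HankelAux.Bmat, HankelAux.mn]
  have hH : (Matrix.of fun i j : Fin n => motzkinGF s t ((i : ℕ) + (j : ℕ)) 0)
      = HankelAux.HankelMat s t n := by
    ext i j
    simp [HankelAux.HankelMat, HankelAux.mn]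
  rw [hB, hH, HankelAux.main_aux, HankelAux.det_Hankel]
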